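/- For every natural number k, there exists an Evolomino instance having exactly k valid solutions. -/

import Mathlib

/-!
Take the `(2k+2) × 2` board whose bottom row is one arrow, with the pre-drawn square at its
left end, and whose top row is white exactly above the odd columns `3, 5, …, 2k+1`. Two
adjacent bottom cells in one block would be two arrow cells of that block, so every block is
a single column: a monomino or a vertical domino. The block of the pre-drawn square is a
monomino, so the next block along the arrow is a domino, standing in one of the `k` white
columns, and a block after it would need three cells. Hence the valid solutions are exactly
the `k` sets `{(1,1), (m,1), (m,2)}` with `m` odd, `3 ≤ m ≤ 2k+1`. (The extra column keeps
the arrow of length at least `2` when `k = 0`.)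
-/

open Pointwise

/-- A cell of the (infinite) grid. -/
abbrev Cell : Type := ℤ × ℤ

/-- Orthogonal adjacency: the two cells differ by exactly 1 in exactly one coordinate. -/
def Adj (c d : Cell) : Prop :=
  (c.1 = d.1 ∧ (c.2 - d.2 = 1 ∨ d.2 - c.2 = 1)) ∨
  (c.2 = d.2 ∧ (c.1 - d.1 = 1 ∨ d.1 - c.1 = 1))

/-- The `p × q` board `{1,…,p} × {1,…,q} ⊆ ℤ × ℤ`. -/
def board (p q : ℕ) : Set Cell :=
  {c | 1 ≤ c.1 ∧ c.1 ≤ (p : ℤ) ∧ 1 ≤ c.2 ∧ c.2 ≤ (q : ℤ)}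

/-- The data of an Evolomino instance. -/
structure EvoInstance where
  p : ℕ
  q : ℕ
  shaded : Set Cell
  presq : Finset Cell
  arrows : List (List Cell)

/-- A cell is white if it lies on the board and is not shaded. -/
def EvoInstance.White (I : EvoInstance) (c : Cell) : Prop :=
  c ∈ board I.p I.q ∧ c ∉ I.shaded

/-- A legal arrow: a duplicate-free list of at least two white cells in which
consecutive cells are orthogonally adjacent. -/
def IsArrow (I : EvoInstance) (A : List Cell) : Prop :=
  A.Nodup ∧ 2 ≤ A.length ∧ (∀ c ∈ A, I.White c) ∧ A.Chain' Adj

/-- Well-formedness of an Evolomino instance: positive dimensions, shaded cells on the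
board, pre-drawn squares white, every arrow legal, and no cell on two arrows. -/
def EvoInstance.WellFormed (I : EvoInstance) : Prop :=
  0 < I.p ∧ 0 < I.q ∧ I.shaded ⊆ board I.p I.q ∧
  (∀ c ∈ I.presq, I.White c) ∧
  (∀ A ∈ I.arrows, IsArrow I A) ∧
  I.arrows.Pairwise (fun A B => ∀ c ∈ A, c ∉ B)

/-- A solution: a set of white cells containing the pre-drawn squares. -/
def IsSolution (I : EvoInstance) (S : Set Cell) : Prop :=
  (∀ c ∈ S, I.White c) ∧ ↑I.presq ⊆ S

/-- Connectivity inside `S` via orthogonal adjacency. -/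
def ConnIn (S : Set Cell) : Cell → Cell → Prop :=
  Relation.ReflTransGen (fun x y => x ∈ S ∧ y ∈ S ∧ Adj x y)

/-- `B` is a block of `S`: a connected component of `S` under orthogonal adjacency. -/
def IsBlock (S : Set Cell) (B : Set Cell) : Prop :=
  ∃ c ∈ S, B = {d | d ∈ S ∧ ConnIn S c d}

/-- The cell `c` lies on some arrow of the instance. -/
def OnArrow (I : EvoInstance) (c : Cell) : Prop :=
  ∃ A ∈ I.arrows, c ∈ A

/-- The set `B` meets the arrow `A`. -/
def Meets (B : Set Cell) (A : List Cell) : Prop :=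
  ∃ c ∈ B, c ∈ A

/-- The first position along the arrow `A` at which a cell of `B` occurs. -/
noncomputable def firstHit (A : List Cell) (B : Set Cell) : ℕ :=
  sInf {i | ∃ h : i < A.length, A.get ⟨i, h⟩ ∈ B}

/-- `B` and `B'` are consecutive blocks of `S` (in arrow order) meeting the arrow `A`. -/
def Consecutive (S : Set Cell) (A : List Cell) (B B' : Set Cell) : Prop :=
  IsBlock S B ∧ IsBlock S B' ∧ Meets B A ∧ Meets B' A ∧
  firstHit A B < firstHit A B' ∧
  ∀ B'', IsBlock S B'' → Meets B'' A →
    firstHit A B'' ≤ firstHit A B ∨ firstHit A B' ≤ firstHit A B''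

/-- A valid solution of an Evolomino instance. -/
def IsValidSolution (I : EvoInstance) (S : Set Cell) : Prop :=
  IsSolution I S ∧
  (∀ B, IsBlock S B → ∃! c, c ∈ B ∧ OnArrow I c) ∧
  (∀ A ∈ I.arrows, ∃ B B', IsBlock S B ∧ IsBlock S B' ∧ B ≠ B' ∧
    Meets B A ∧ Meets B' A) ∧
  (∀ A ∈ I.arrows, ∀ B B', Consecutive S A B B' →
    B'.ncard = B.ncard + 1 ∧ ∃ v : Cell, v +ᵥ B ⊆ B')

theorem adj_symm {c d : Cell} (h : Adj c d) : Adj d c := by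
  unfold Adj at *; omega

section Columns

def column (S : Set Cell) (j : ℤ) : Set Cell := {c | c ∈ S ∧ c.1 = j}

/-- A disjoint union of vertical monominoes and dominoes in the rows `1` and `2`. -/
def IsColumnar (S : Set Cell) : Prop :=
  (∀ c ∈ S, c.2 = 1 ∨ c.2 = 2) ∧ ∀ c ∈ S, ∀ d ∈ S, Adj c d → c.1 = d.1

variable {S : Set Cell}

theorem IsColumnar.component_eq_column (hS : IsColumnar S) {x : Cell} (hx : x ∈ S) :
    {d | d ∈ S ∧ ConnIn S x d} = column S x.1 := by
  have hcol : ∀ d, ConnIn S x d → d.1 = x.1 := fun d hxd => by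
    induction hxd with
    | refl => rfl
    | tail _ hstep ih => exact (hS.2 _ hstep.2.1 _ hstep.1 (adj_symm hstep.2.2)).trans ih
  refine Set.ext fun d =>
    ⟨fun ⟨hd, hxd⟩ => ⟨hd, hcol d hxd⟩, fun ⟨hd, hdx⟩ => ⟨hd, ?_⟩⟩
  by_cases hxd : x = d
  · exact hxd ▸ Relation.ReflTransGen.refl
  · refine Relation.ReflTransGen.single ⟨hx, hd, ?_⟩
    have := hS.1 x hx
    have := hS.1 d hd
    have : x.2 ≠ d.2 := fun h => hxd (Prod.ext hdx.symm h)
    unfold Adj; omega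

theorem IsColumnar.isBlock_iff (hS : IsColumnar S) {B : Set Cell} :
    IsBlock S B ↔ ∃ c ∈ S, B = column S c.1 := by
  unfold IsBlock
  refine exists_congr fun c => and_congr_right fun hc => ?_
  rw [hS.component_eq_column hc]

theorem IsColumnar.column_subset (hS : IsColumnar S) (j : ℤ) :
    column S j ⊆ {(j, 1), (j, 2)} := by
  rintro ⟨a, b⟩ ⟨hc, rfl⟩
  rcases hS.1 _ hc with rfl | rfl <;> simp

theorem IsColumnar.column_eq_pair (hS : IsColumnar S) {j : ℤ} (h1 : (j, 1) ∈ S)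
    (h2 : (j, 2) ∈ S) : column S j = {(j, 1), (j, 2)} :=
  (hS.column_subset j).antisymm (by simp [Set.insert_subset_iff, column, h1, h2])

theorem IsColumnar.column_eq_singleton (hS : IsColumnar S) {j : ℤ} (h1 : (j, 1) ∈ S)
    (h2 : (j, 2) ∉ S) : column S j = {(j, 1)} := by
  refine Set.Subset.antisymm (fun c hc => ?_) (by simp [column, h1])
  rcases hS.column_subset j hc with h | h
  · exact h
  · exact absurd (h ▸ hc.1) h2

end Columns

theorem exists_least_column_gt {S : Set Cell} {a : ℤ} (h : ∃ b, a < b ∧ (b, 1) ∈ S) :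
    ∃ b, a < b ∧ (b, 1) ∈ S ∧ ∀ c, a < c → c < b → (c, 1) ∉ S := by
  obtain ⟨b, ⟨hab, hb⟩, hleast⟩ :=
    Int.exists_least_of_bdd ⟨a, fun z (hz : a < z ∧ _) => hz.1.le⟩ h
  exact ⟨b, hab, hb, fun c hac hcb hc => (hleast c ⟨hac, hc⟩).not_gt hcb⟩

def bottomRow (p : ℕ) : List Cell := (List.range p).map fun i : ℕ => ((i : ℤ) + 1, 1)

theorem mem_bottomRow {p : ℕ} {c : Cell} :
    c ∈ bottomRow p ↔ c.2 = 1 ∧ 1 ≤ c.1 ∧ c.1 ≤ p := by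
  obtain ⟨a, b⟩ := c
  simp only [bottomRow, List.mem_map, List.mem_range, Prod.mk.injEq]
  constructor
  · rintro ⟨i, hi, rfl, rfl⟩
    omega
  · rintro ⟨rfl, h1, hp⟩
    exact ⟨(a - 1).toNat, by omega, by omega, rfl⟩

theorem firstHit_bottomRow {p : ℕ} {B : Set Cell} {j : ℤ} (h1 : 1 ≤ j) (hp : j ≤ p)
    (hj : (j, 1) ∈ B) (hcol : ∀ c ∈ B, c.1 = j) :
    firstHit (bottomRow p) B = (j - 1).toNat := by
  have hget : ∀ i (hi : i < (bottomRow p).length),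
      (bottomRow p).get ⟨i, hi⟩ = ((i : ℤ) + 1, 1) := by
    simp [bottomRow]
  have hlen : (j - 1).toNat < (bottomRow p).length := by
    simp only [bottomRow, List.length_map, List.length_range]; omega
  refine IsLeast.csInf_eq ⟨⟨hlen, ?_⟩, fun i ⟨hi, h⟩ => ?_⟩
  · rwa [hget, show ((j - 1).toNat : ℤ) + 1 = j by omega]
  · have := hcol _ (hget i hi ▸ h)
    omega

def countingInstance (k : ℕ) : EvoInstance where
  p := 2 * k + 2
  q := 2
  shaded := {c | c.2 = 2 ∧ 1 ≤ c.1 ∧ c.1 ≤ 2 * k + 2 ∧ (c.1 = 1 ∨ c.1 % 2 = 0)}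
  presq := {(1, 1)}
  arrows := [bottomRow (2 * k + 2)]

def solutionAt (m : ℤ) : Set Cell := {(1, 1), (m, 1), (m, 2)}

theorem mem_solutionAt {m a b : ℤ} :
    (a, b) ∈ solutionAt m ↔ a = 1 ∧ b = 1 ∨ a = m ∧ b = 1 ∨ a = m ∧ b = 2 := by
  simp [solutionAt]

theorem isColumnar_solutionAt {m : ℤ} (h3 : 3 ≤ m) : IsColumnar (solutionAt m) := by
  refine ⟨fun ⟨a, b⟩ hc => by rw [mem_solutionAt] at hc; omega,
    fun ⟨a, b⟩ hc ⟨a', b'⟩ hd hadj => ?_⟩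
  rw [mem_solutionAt] at hc hd
  unfold Adj at hadj
  dsimp only at hadj ⊢
  omega

theorem isBlock_solutionAt_iff {m : ℤ} (h3 : 3 ≤ m) {B : Set Cell} :
    IsBlock (solutionAt m) B ↔ B = {(1, 1)} ∨ B = {(m, 1), (m, 2)} := by
  have hcol := isColumnar_solutionAt h3
  rw [hcol.isBlock_iff,
    ← hcol.column_eq_singleton (mem_solutionAt.2 (by omega)) (mem_solutionAt.not.2 (by omega)),
    ← hcol.column_eq_pair (mem_solutionAt.2 (by omega)) (mem_solutionAt.2 (by omega))]
  constructor
  · rintro ⟨⟨a, b⟩, hc, rfl⟩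
    rw [mem_solutionAt] at hc
    rcases hc with ⟨rfl, -⟩ | ⟨rfl, -⟩ | ⟨rfl, -⟩ <;> simp
  · rintro (rfl | rfl)
    exacts [⟨(1, 1), mem_solutionAt.2 (by omega), rfl⟩,
      ⟨(m, 1), mem_solutionAt.2 (by omega), rfl⟩]

theorem IsColumnar.eq_solutionAt {S : Set Cell} {m : ℤ} (hS : IsColumnar S)
    (h11 : (1, 1) ∈ S) (h12 : (1, 2) ∉ S) (hm1 : (m, 1) ∈ S) (hm2 : (m, 2) ∈ S)
    (hcols : ∀ c ∈ S, c.1 = 1 ∨ c.1 = m) : S = solutionAt m := by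
  refine Set.ext fun ⟨a, b⟩ => ⟨fun hc => ?_, fun hc => ?_⟩ <;> rw [mem_solutionAt] at *
  · rcases hcols _ hc with rfl | rfl
    · rcases hS.1 _ hc with rfl | rfl
      exacts [Or.inl ⟨rfl, rfl⟩, absurd hc h12]
    · have := hS.1 _ hc
      omega
  · rcases hc with ⟨rfl, rfl⟩ | ⟨rfl, rfl⟩ | ⟨rfl, rfl⟩ <;> assumption

section CountingInstance

variable {k : ℕ}

theorem white_countingInstance_iff {c : Cell} :
    (countingInstance k).White c ↔ 1 ≤ c.1 ∧ c.1 ≤ 2 * k + 2 ∧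
      (c.2 = 1 ∨ c.2 = 2 ∧ 3 ≤ c.1 ∧ c.1 % 2 = 1) := by
  simp only [EvoInstance.White, countingInstance, board, Set.mem_ofPred_eq]
  omega

theorem onArrow_countingInstance_iff {c : Cell} :
    OnArrow (countingInstance k) c ↔ c.2 = 1 ∧ 1 ≤ c.1 ∧ c.1 ≤ 2 * k + 2 := by
  simp [OnArrow, countingInstance, mem_bottomRow]

theorem wellFormed_countingInstance : (countingInstance k).WellFormed := by
  refine ⟨by simp [countingInstance], by simp [countingInstance], ?_, ?_, ?_,
    by simp [countingInstance]⟩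
  · intro c hc
    simp only [countingInstance, board, Set.mem_ofPred_eq] at hc ⊢
    omega
  · intro c hc
    obtain rfl : c = (1, 1) := Finset.mem_singleton.1 hc
    simp [white_countingInstance_iff]
    omega
  · intro A hA
    obtain rfl : A = bottomRow (2 * k + 2) := by simpa [countingInstance] using hA
    refine ⟨?_, by simp [bottomRow], fun c hc => ?_, ?_⟩
    · exact List.Nodup.map (fun i j hij => by simpa using hij) List.nodup_range
    · rw [mem_bottomRow] at hc
      rw [white_countingInstance_iff]
      omega
    · rw [List.Chain', bottomRow, List.isChain_map, List.isChain_range_succ]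
      intro i _
      exact Or.inr ⟨rfl, Or.inr (by push_cast; ring)⟩

theorem isValidSolution_solutionAt {m : ℤ} (h3 : 3 ≤ m) (hm : m ≤ 2 * k + 1)
    (hodd : m % 2 = 1) :
    IsValidSolution (countingInstance k) (solutionAt m) := by
  have hblocks := fun B => isBlock_solutionAt_iff (B := B) h3
  have hfh1 : firstHit (bottomRow (2 * k + 2)) {(1, 1)} = 0 :=
    firstHit_bottomRow le_rfl (by omega) rfl (by simp)
  have hfhm : firstHit (bottomRow (2 * k + 2)) {(m, 1), (m, 2)} = (m - 1).toNat :=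
    firstHit_bottomRow (by omega) (by omega) (by simp) (by simp)
  have hA : ∀ A ∈ (countingInstance k).arrows, A = bottomRow (2 * k + 2) := by
    simp [countingInstance]
  refine ⟨⟨fun ⟨a, b⟩ hc => ?_, by simp [countingInstance, solutionAt]⟩,
    fun B hB => ?_, fun A hA' => ?_, fun A hA' B B' hcons => ?_⟩
  · rw [mem_solutionAt] at hc
    rw [white_countingInstance_iff]
    omega
  · rcases (hblocks B).1 hB with rfl | rfl
    · exact ⟨(1, 1), ⟨rfl, onArrow_countingInstance_iff.2 (by simp; omega)⟩,
        fun c hc => hc.1⟩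
    · refine ⟨(m, 1), ⟨by simp, onArrow_countingInstance_iff.2 (by simp; omega)⟩, ?_⟩
      rintro c ⟨rfl | rfl, hc⟩
      · rfl
      · simp [onArrow_countingInstance_iff] at hc
  · obtain rfl := hA A hA'
    refine ⟨_, _, (hblocks _).2 (Or.inl rfl), (hblocks _).2 (Or.inr rfl), ?_,
      ⟨(1, 1), rfl, mem_bottomRow.2 (by simp; omega)⟩,
      ⟨(m, 1), by simp, mem_bottomRow.2 (by simp; omega)⟩⟩
    rw [Ne, Set.ext_iff, not_forall]
    exact ⟨(1, 1), by simp; omega⟩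
  · obtain rfl := hA A hA'
    obtain ⟨hB, hB', -, -, hlt, -⟩ := hcons
    rcases (hblocks B).1 hB with rfl | rfl <;> rcases (hblocks B').1 hB' with rfl | rfl
    · exact absurd hlt (lt_irrefl _)
    · refine ⟨by rw [Set.ncard_pair (by simp), Set.ncard_singleton], (m - 1, 0), ?_⟩
      simp [Set.singleton_subset_iff]
    · rw [hfh1, hfhm] at hlt
      omega
    · exact absurd hlt (lt_irrefl _)

variable {S : Set Cell}

theorem isColumnar_of_isValidSolution (hS : IsValidSolution (countingInstance k) S) :
    IsColumnar S := by
  have hwhite := fun c hc => white_countingInstance_iff.1 (hS.1.1 c hc)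
  refine ⟨fun c hc => by have := hwhite c hc; omega, fun c hc d hd hadj => ?_⟩
  by_contra hne
  have hrow : c.2 = d.2 := by unfold Adj at hadj; omega
  have hc' := hwhite c hc
  have hd' := hwhite d hd
  rcases hc'.2.2 with hc1 | ⟨hc2, -, hcodd⟩
  · obtain ⟨a, -, huniq⟩ := hS.2.1 _ ⟨c, hc, rfl⟩
    have hca := huniq c ⟨⟨hc, .refl⟩, onArrow_countingInstance_iff.2 (by omega)⟩
    have hda := huniq d
      ⟨⟨hd, .single ⟨hc, hd, hadj⟩⟩, onArrow_countingInstance_iff.2 (by omega)⟩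
    exact hne (congrArg Prod.fst (hca.trans hda.symm))
  · unfold Adj at hadj
    omega

theorem bottom_mem_of_isValidSolution (hS : IsValidSolution (countingInstance k) S) {c : Cell}
    (hc : c ∈ S) : (c.1, 1) ∈ S := by
  have hB := (isColumnar_of_isValidSolution hS).isBlock_iff.2 ⟨c, hc, rfl⟩
  obtain ⟨a, ⟨⟨haS, hac⟩, ha⟩, -⟩ := hS.2.1 _ hB
  have : a = (c.1, 1) := Prod.ext hac (onArrow_countingInstance_iff.1 ha).1
  rwa [← this]

theorem top_mem_of_consecutive_columns (hS : IsValidSolution (countingInstance k) S) {a b : ℤ}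
    (hab : a < b) (ha : (a, 1) ∈ S) (hb : (b, 1) ∈ S)
    (hgap : ∀ c, a < c → c < b → (c, 1) ∉ S) :
    (a, 2) ∉ S ∧ (b, 2) ∈ S := by
  have hcol := isColumnar_of_isValidSolution hS
  have hrange : ∀ c ∈ S, 1 ≤ c.1 ∧ c.1 ≤ 2 * k + 2 := fun c hc => by
    have := white_countingInstance_iff.1 (hS.1.1 c hc); omega
  have hfh : ∀ j, (j, 1) ∈ S →
      firstHit (bottomRow (2 * k + 2)) (column S j) = (j - 1).toNat :=
    fun j hj => firstHit_bottomRow (hrange _ hj).1 (hrange _ hj).2 ⟨hj, rfl⟩ fun c hc => hc.2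
  have hmeets : ∀ j, (j, 1) ∈ S → Meets (column S j) (bottomRow (2 * k + 2)) :=
    fun j hj => ⟨(j, 1), ⟨hj, rfl⟩, mem_bottomRow.2 ⟨rfl, hrange _ hj⟩⟩
  have hcons : Consecutive S (bottomRow (2 * k + 2)) (column S a) (column S b) := by
    refine ⟨hcol.isBlock_iff.2 ⟨_, ha, rfl⟩, hcol.isBlock_iff.2 ⟨_, hb, rfl⟩, hmeets a ha,
      hmeets b hb, by rw [hfh a ha, hfh b hb]; have := hrange _ ha; omega, fun B hB _ => ?_⟩
    obtain ⟨c, hc, rfl⟩ := hcol.isBlock_iff.1 hB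
    have hc1 := bottom_mem_of_isValidSolution hS hc
    rw [hfh _ hc1, hfh a ha, hfh b hb]
    have : ¬(a < c.1 ∧ c.1 < b) := fun h => hgap _ h.1 h.2 hc1
    have := hrange _ hc
    have := hrange _ ha
    omega
  have hcard := (hS.2.2.2 _ (List.mem_singleton_self _) _ _ hcons).1
  have hpair : ∀ j : ℤ, ({(j, 1), (j, 2)} : Set Cell).ncard = 2 :=
    fun j => Set.ncard_pair (by simp)
  by_cases ha2 : (a, 2) ∈ S <;> by_cases hb2 : (b, 2) ∈ S
  all_goals
    simp [hcol.column_eq_pair, hcol.column_eq_singleton, ha, hb, ha2, hb2, hpair] at hcard ⊢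

theorem exists_column_gt_one_of_isValidSolution
    (hS : IsValidSolution (countingInstance k) S) : ∃ b, 1 < b ∧ (b, 1) ∈ S := by
  have hcol := isColumnar_of_isValidSolution hS
  obtain ⟨B, B', hB, hB', hne, -⟩ := hS.2.2.1 _ (List.mem_singleton_self _)
  obtain ⟨c, hc, rfl⟩ := hcol.isBlock_iff.1 hB
  obtain ⟨c', hc', rfl⟩ := hcol.isBlock_iff.1 hB'
  have h1 := (white_countingInstance_iff.1 (hS.1.1 c hc)).1
  have h1' := (white_countingInstance_iff.1 (hS.1.1 c' hc')).1
  by_cases hc1 : c.1 = 1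
  · have : c'.1 ≠ 1 := fun h => hne (by rw [hc1, h])
    exact ⟨c'.1, by omega, bottom_mem_of_isValidSolution hS hc'⟩
  · exact ⟨c.1, by omega, bottom_mem_of_isValidSolution hS hc⟩

theorem eq_solutionAt_of_isValidSolution (hS : IsValidSolution (countingInstance k) S) :
    ∃ m : ℤ, 3 ≤ m ∧ m ≤ 2 * k + 1 ∧ m % 2 = 1 ∧ S = solutionAt m := by
  have hwhite := fun c hc => white_countingInstance_iff.1 (hS.1.1 c hc)
  have h11 : ((1, 1) : Cell) ∈ S := hS.1.2 (by simp [countingInstance])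
  have h12 : ((1, 2) : Cell) ∉ S := fun h => by have := hwhite _ h; simp at this
  obtain ⟨m, h1m, hm, hgap⟩ :=
    exists_least_column_gt (exists_column_gt_one_of_isValidSolution hS)
  have hm2 := (top_mem_of_consecutive_columns hS h1m h11 hm hgap).2
  have hlast : ∀ n, m < n → (n, 1) ∉ S := fun n hmn hn => by
    obtain ⟨n', hmn', hn', hgap'⟩ := exists_least_column_gt ⟨n, hmn, hn⟩
    exact (top_mem_of_consecutive_columns hS hmn' hm hn' hgap').1 hm2
  have hcols : ∀ c ∈ S, c.1 = 1 ∨ c.1 = m := fun c hc => by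
    have hc1 := bottom_mem_of_isValidSolution hS hc
    have := (hwhite _ hc).1
    by_contra h
    rcases lt_or_gt_of_ne (Ne.symm (not_or.1 h).2) with hmc | hcm
    · exact hlast _ hmc hc1
    · exact hgap _ (by omega) hcm hc1
  have hmw := hwhite _ hm2
  dsimp only at hmw
  exact ⟨m, by omega, by omega, by omega,
    (isColumnar_of_isValidSolution hS).eq_solutionAt h11 h12 hm hm2 hcols⟩

theorem setOf_isValidSolution_countingInstance :
    {S | IsValidSolution (countingInstance k) S} =
      (fun i : ℕ => solutionAt (2 * i + 3)) '' Set.Iio k := by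
  ext S
  refine ⟨fun hS => ?_, ?_⟩
  · obtain ⟨m, h3, hm, hodd, rfl⟩ := eq_solutionAt_of_isValidSolution hS
    exact ⟨(m - 3).toNat / 2, Set.mem_Iio.2 (by omega), congrArg solutionAt (by omega)⟩
  · rintro ⟨i, hi, rfl⟩
    exact isValidSolution_solutionAt (by omega) (by have := Set.mem_Iio.1 hi; omega) (by omega)

end CountingInstance

theorem solutionAt_odd_injective : Function.Injective fun i : ℕ => solutionAt (2 * i + 3) := by
  intro i j hij
  have : ((2 * i + 3 : ℤ), (1 : ℤ)) ∈ solutionAt (2 * j + 3) := by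
    rw [← show solutionAt (2 * i + 3) = solutionAt (2 * j + 3) from hij]
    simp [solutionAt]
  rw [mem_solutionAt] at this
  omega

/-- Every natural number is the number of valid solutions of some
(well-formed) Evolomino instance. -/
theorem evolomino_every_solution_count (k : ℕ) :
    ∃ I : EvoInstance, I.WellFormed ∧
      Nat.card {S : Set Cell // IsValidSolution I S} = k := by
  refine ⟨countingInstance k, wellFormed_countingInstance, ?_⟩
  rw [← Set.coe_ofPred, Nat.card_coe_set_eq, setOf_isValidSolution_countingInstance,
    Set.ncard_image_of_injective _ solutionAt_odd_injective, Set.ncard_Iio_nat]
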